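/- For n ≥ 1 and even q ≥ 4, the maximum size of a length-n code over Z_q correcting any number of reverse-complement duplications of length 1 is q·((q−2)^n − 1)/(q−3), and hence the coding capacity equals log_q(q−2). -/

import Mathlib

/-!
A length-one duplication inserts `bar c` right after `c`, which only lengthens a
`{c, bar c}`-block, so it preserves the signature. Conversely, by induction on the word,
every word derives, for some `m ≥ 1` and hence for all larger `m`, the word made of the
alternating blocks `a, bar a, a, …` of length `m` led by the letters of its signature. Hence two
words have a common descendant iff they have the same signature, and a code is just a set of
words of length `n` with distinct signatures. The maximum is the number of signatures of
length-`n` words: the nonempty words of length at most `n` in which no letter lies in the block of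
its predecessor, of which there are `q (q - 2) ^ (j - 1)` of length `j`. This count lies between
`(q - 2) ^ n` and `q (q - 2) ^ n`, which gives the capacity.
-/

/-- One reverse-complement duplication of length `k`: a `k`-factor `v` of `x`
gets a reverse-complement copy inserted right after it. -/
def RCStep {q : ℕ} (bar : ZMod q → ZMod q) (k : ℕ) (x y : List (ZMod q)) : Prop :=
  ∃ u v w : List (ZMod q), v.length = k ∧ x = u ++ v ++ w ∧
    y = u ++ v ++ (v.map bar).reverse ++ w

/-- Finitely many (possibly zero) reverse-complement duplications of length `k`. -/
def RCDerives {q : ℕ} (bar : ZMod q → ZMod q) (k : ℕ) :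
    List (ZMod q) → List (ZMod q) → Prop :=
  Relation.ReflTransGen (RCStep bar k)

/-- `C` is a length-`n` code correcting any number of length-`k`
reverse-complement duplications: distinct codewords have disjoint descendant cones. -/
def IsRCCode {q : ℕ} (bar : ZMod q → ZMod q) (k n : ℕ) (C : Finset (List (ZMod q))) : Prop :=
  (∀ c ∈ C, c.length = n) ∧
    ∀ c ∈ C, ∀ c' ∈ C, c ≠ c' →
      ∀ z, RCDerives bar k c z → ¬ RCDerives bar k c' z

/-- The maximal size of such a code. -/
noncomputable def maxRCCode {q : ℕ} (bar : ZMod q → ZMod q) (k n : ℕ) : ℕ :=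
  sSup {M : ℕ | ∃ C : Finset (List (ZMod q)), IsRCCode bar k n C ∧ C.card = M}

open Finset Filter Topology

section Signature

variable {α : Type*} (bar : α → α)

def SameBlock (a b : α) : Prop := b = a ∨ b = bar a

variable {bar} in
lemma SameBlock.sameBlock_iff (hinv : Function.Involutive bar) {a b c : α}
    (h : SameBlock bar a b) : SameBlock bar b c ↔ SameBlock bar a c := by
  rcases h with rfl | rfl
  · rfl
  · simp only [SameBlock, hinv a]; tauto

def IsSignature (s : List α) : Prop := s.IsChain fun a b => ¬SameBlock bar a b

variable [DecidableEq α]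

instance : DecidableRel (SameBlock bar) := fun _ _ => inferInstanceAs (Decidable (_ ∨ _))

instance : DecidablePred (IsSignature bar) :=
  fun _ => inferInstanceAs (Decidable (List.IsChain _ _))

def consSig (a : α) : List α → List α
  | [] => [a]
  | b :: t => if SameBlock bar a b then a :: t else a :: b :: t

/-- The signature `σ`, computed from the right: prepending `a` replaces the leading letter of the
signature of the rest when that letter lies in `{a, bar a}`. -/
def sig : List α → List α := List.foldr (consSig bar) []

variable {bar}

@[simp] lemma sig_cons (a : α) (l : List α) : sig bar (a :: l) = consSig bar a (sig bar l) := rfl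

lemma sig_append (u l : List α) : sig bar (u ++ l) = u.foldr (consSig bar) (sig bar l) :=
  List.foldr_append

lemma consSig_consSig_of_sameBlock (hinv : Function.Involutive bar) {a b : α}
    (h : SameBlock bar a b) (s : List α) : consSig bar a (consSig bar b s) = consSig bar a s := by
  cases s with
  | nil => simp [consSig, h]
  | cons c t =>
      by_cases hbc : SameBlock bar b c
      · simp [consSig, hbc, (h.sameBlock_iff hinv).mp hbc, h]
      · simp [consSig, hbc, mt (h.sameBlock_iff hinv).mpr hbc, h]

lemma consSig_ne_nil (a : α) (s : List α) : consSig bar a s ≠ [] := by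
  cases s with
  | nil => simp [consSig]
  | cons b t => simp only [consSig]; split_ifs <;> simp

lemma length_consSig_le (a : α) (s : List α) : (consSig bar a s).length ≤ s.length + 1 := by
  cases s with
  | nil => simp [consSig]
  | cons b t => simp only [consSig]; split_ifs <;> simp

lemma sig_ne_nil {x : List α} (hx : x ≠ []) : sig bar x ≠ [] := by
  obtain ⟨a, l, rfl⟩ := List.exists_cons_of_ne_nil hx
  exact consSig_ne_nil a _

lemma length_sig_le (x : List α) : (sig bar x).length ≤ x.length := by
  induction x with
  | nil => rfl
  | cons a l ih => exact (length_consSig_le a _).trans (Nat.succ_le_succ ih)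

lemma IsSignature.consSig (hinv : Function.Involutive bar) (a : α) {s : List α}
    (hs : IsSignature bar s) : IsSignature bar (consSig bar a s) := by
  rcases s with _ | ⟨b, _ | ⟨c, t⟩⟩
  · exact List.isChain_singleton a
  · simp only [_root_.consSig]; split_ifs <;> simp [IsSignature, *]
  · rw [IsSignature, List.isChain_cons_cons] at hs
    simp only [_root_.consSig]
    split_ifs with hab
    · exact List.isChain_cons_cons.mpr ⟨mt (hab.sameBlock_iff hinv).mpr hs.1, hs.2⟩
    · exact List.isChain_cons_cons.mpr ⟨hab, List.isChain_cons_cons.mpr hs⟩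

lemma isSignature_sig (hinv : Function.Involutive bar) (x : List α) :
    IsSignature bar (sig bar x) := by
  induction x with
  | nil => exact List.isChain_nil
  | cons a l ih => exact ih.consSig hinv a

lemma IsSignature.sig_eq {s : List α} (hs : IsSignature bar s) : sig bar s = s := by
  induction s with
  | nil => rfl
  | cons a t ih =>
      rw [sig_cons, ih (List.IsChain.tail hs)]
      cases t with
      | nil => rfl
      | cons b r =>
          have hab : ¬SameBlock bar a b := (List.isChain_cons_cons.mp hs).1
          simp only [_root_.consSig, if_neg hab]

lemma sig_replicate_append (hinv : Function.Involutive bar) (k : ℕ) (a : α) (t : List α) :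
    sig bar (List.replicate k a ++ a :: t) = sig bar (a :: t) := by
  induction k with
  | zero => rfl
  | succ k ih =>
      rw [List.replicate_succ, List.cons_append, sig_cons, ih, sig_cons,
        consSig_consSig_of_sameBlock hinv (Or.inl rfl)]

end Signature

section Counting

variable {α : Type*} [DecidableEq α] [Fintype α] (bar : α → α)

def signaturesOfLength : ℕ → Finset (List α)
  | 0 => {[]}
  | m + 1 => (signaturesOfLength m).biUnion fun t =>
      ({a | IsSignature bar (a :: t)} : Finset α).image (· :: t)

/-- For `n ≥ 1`, the signatures of the words of length `n`. -/
def signatures (n : ℕ) : Finset (List α) :=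
  (range n).biUnion fun j => signaturesOfLength bar (j + 1)

variable {bar}

lemma mem_signaturesOfLength {m : ℕ} {s : List α} :
    s ∈ signaturesOfLength bar m ↔ s.length = m ∧ IsSignature bar s := by
  induction m generalizing s with
  | zero =>
      simp only [signaturesOfLength, mem_singleton]
      constructor
      · rintro rfl
        exact ⟨rfl, List.isChain_nil⟩
      · rintro ⟨h, -⟩
        exact List.length_eq_zero_iff.mp h
  | succ m ih =>
      simp only [signaturesOfLength, mem_biUnion, mem_image, mem_filter, mem_univ, true_and, ih]
      constructor
      · rintro ⟨t, ⟨rfl, -⟩, a, ha, rfl⟩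
        exact ⟨rfl, ha⟩
      · rintro ⟨hlen, hs⟩
        obtain ⟨a, t, rfl⟩ := List.exists_cons_of_length_eq_add_one hlen
        exact ⟨t, ⟨by simpa using hlen, List.IsChain.tail hs⟩, a, hs, rfl⟩

lemma card_not_sameBlock (hinv : Function.Involutive bar) (hfp : ∀ a, bar a ≠ a) (b : α) :
    #{a | ¬SameBlock bar a b} = Fintype.card α - 2 := by
  have h : ({a | ¬SameBlock bar a b} : Finset α) = {b, bar b}ᶜ := by
    ext a
    have hbar : b = bar a ↔ a = bar b := eq_comm.trans hinv.eq_iff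
    simp only [mem_filter, mem_univ, true_and, mem_compl, mem_insert, mem_singleton]
    simp only [SameBlock, @eq_comm _ b a, hbar]
  rw [h, card_compl, card_pair (hfp b).symm]

lemma card_signaturesOfLength_succ (hinv : Function.Involutive bar) (hfp : ∀ a, bar a ≠ a)
    (m : ℕ) :
    #(signaturesOfLength bar (m + 1)) = Fintype.card α * (Fintype.card α - 2) ^ m := by
  induction m with
  | zero =>
      simp [signaturesOfLength, IsSignature,
        card_image_of_injective _ fun _ _ => List.head_eq_of_cons_eq]
  | succ m ih =>
      rw [signaturesOfLength, card_biUnion, sum_congr rfl (g := fun _ => Fintype.card α - 2),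
        sum_const, ih, smul_eq_mul, pow_succ]
      · ring
      · intro t ht
        obtain ⟨hlen, hs⟩ := mem_signaturesOfLength.mp ht
        obtain ⟨b, r, rfl⟩ := List.exists_cons_of_length_eq_add_one hlen
        rw [card_image_of_injective _ fun _ _ => List.head_eq_of_cons_eq,
          ← card_not_sameBlock hinv hfp b]
        congr 1
        ext a
        simp only [mem_filter, mem_univ, true_and]
        exact ⟨fun h => (List.isChain_cons_cons.mp h).1,
          fun h => List.isChain_cons_cons.mpr ⟨h, hs⟩⟩
      · intro t _ t' _ hne
        simp only [Function.onFun, disjoint_left, mem_image]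
        rintro _ ⟨a, -, rfl⟩ ⟨a', -, h⟩
        exact hne (List.tail_eq_of_cons_eq h).symm

lemma card_signatures (hinv : Function.Involutive bar) (hfp : ∀ a, bar a ≠ a) (n : ℕ) :
    #(signatures bar n) = Fintype.card α * ∑ j ∈ range n, (Fintype.card α - 2) ^ j := by
  rw [signatures, card_biUnion, mul_sum]
  · exact sum_congr rfl fun j _ => card_signaturesOfLength_succ hinv hfp j
  · intro j _ j' _ hne
    simp only [Function.onFun, disjoint_left, mem_signaturesOfLength]
    rintro s ⟨h, -⟩ ⟨h', -⟩
    omega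

lemma mem_signatures {n : ℕ} {s : List α} :
    s ∈ signatures bar n ↔ s ≠ [] ∧ s.length ≤ n ∧ IsSignature bar s := by
  simp only [signatures, mem_biUnion, mem_range, mem_signaturesOfLength, ne_eq,
    ← List.length_eq_zero_iff]
  constructor
  · rintro ⟨j, hj, hlen, hs⟩
    exact ⟨by omega, by omega, hs⟩
  · rintro ⟨hne, hlen, hs⟩
    exact ⟨s.length - 1, by omega, by omega, hs⟩

lemma sig_mem_signatures (hinv : Function.Involutive bar) {x : List α} (hx : x ≠ []) :
    sig bar x ∈ signatures bar x.length :=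
  mem_signatures.mpr ⟨sig_ne_nil hx, length_sig_le x, isSignature_sig hinv x⟩

end Counting

section Padding

variable {α : Type*}

def padFirst (n : ℕ) : List α → List α
  | [] => []
  | a :: t => (a :: t).leftpad n a

lemma length_padFirst {n : ℕ} {s : List α} (hs : s ≠ []) (hn : s.length ≤ n) :
    (padFirst n s).length = n := by
  obtain ⟨a, t, rfl⟩ := List.exists_cons_of_ne_nil hs
  simp only [padFirst, List.length_leftpad]
  exact max_eq_left hn

lemma sig_padFirst [DecidableEq α] {bar : α → α} (hinv : Function.Involutive bar) (n : ℕ)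
    {s : List α} (hs : IsSignature bar s) : sig bar (padFirst n s) = s := by
  cases s with
  | nil => rfl
  | cons a t => rw [padFirst, List.leftpad, sig_replicate_append hinv, hs.sig_eq]

end Padding

section Blocks

variable {α : Type*} (bar : α → α)

def alternating (a : α) : ℕ → List α
  | 0 => []
  | m + 1 => a :: alternating (bar a) m

def blockWord (s : List α) (m : ℕ) : List α := s.flatMap fun a => alternating bar a m

variable {bar}

lemma alternating_add_two (hinv : Function.Involutive bar) (a : α) (m : ℕ) :
    alternating bar a (m + 2) = a :: bar a :: alternating bar a m := by
  rw [alternating, alternating, hinv a]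

end Blocks

section Duplication

variable {q k : ℕ} {bar : ZMod q → ZMod q} {x y x' y' : List (ZMod q)}

lemma rcStep_one_iff :
    RCStep bar 1 x y ↔ ∃ u c w, x = u ++ c :: w ∧ y = u ++ c :: bar c :: w := by
  constructor
  · rintro ⟨u, v, w, hv, rfl, rfl⟩
    obtain ⟨c, rfl⟩ := List.length_eq_one_iff.mp hv
    exact ⟨u, c, w, by simp, by simp⟩
  · rintro ⟨u, c, w, rfl, rfl⟩
    exact ⟨u, [c], w, rfl, by simp, by simp⟩

lemma RCStep.context (h : RCStep bar k x y) (u w : List (ZMod q)) :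
    RCStep bar k (u ++ x ++ w) (u ++ y ++ w) := by
  obtain ⟨u', v, w', hv, rfl, rfl⟩ := h
  exact ⟨u ++ u', v, w' ++ w, hv, by simp, by simp⟩

lemma RCDerives.context (h : RCDerives bar k x y) (u w : List (ZMod q)) :
    RCDerives bar k (u ++ x ++ w) (u ++ y ++ w) :=
  Relation.ReflTransGen.lift (fun z => u ++ z ++ w) (fun _ _ hs => hs.context u w) _ _ h

lemma RCDerives.append (hx : RCDerives bar k x x') (hy : RCDerives bar k y y') :
    RCDerives bar k (x ++ y) (x' ++ y') := by
  have h₁ := hx.context [] y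
  have h₂ := hy.context x' []
  simp only [List.nil_append, List.append_nil] at h₁ h₂
  exact h₁.trans h₂

lemma RCDerives.cons (a : ZMod q) (h : RCDerives bar k x y) :
    RCDerives bar k (a :: x) (a :: y) :=
  RCDerives.append (x := [a]) .refl h

lemma sig_eq_of_rcStep (hinv : Function.Involutive bar) (h : RCStep bar 1 x y) :
    sig bar y = sig bar x := by
  obtain ⟨u, c, w, rfl, rfl⟩ := rcStep_one_iff.mp h
  simp only [sig_append, sig_cons, consSig_consSig_of_sameBlock hinv (Or.inr rfl)]

lemma sig_eq_of_rcDerives (hinv : Function.Involutive bar) (h : RCDerives bar 1 x y) :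
    sig bar y = sig bar x := by
  induction h with
  | refl => rfl
  | tail _ hs ih => exact (sig_eq_of_rcStep hinv hs).trans ih

lemma rcStep_alternating (a : ZMod q) (m : ℕ) :
    RCStep bar 1 (alternating bar a (m + 1)) (alternating bar a (m + 2)) := by
  induction m generalizing a with
  | zero => exact rcStep_one_iff.mpr ⟨[], a, [], rfl, rfl⟩
  | succ m ih =>
      change RCStep bar 1 (a :: alternating bar (bar a) (m + 1))
        (a :: alternating bar (bar a) (m + 2))
      simpa using (ih (bar a)).context [a] []

lemma rcDerives_alternating (a : ZMod q) {m m' : ℕ} (hm : 1 ≤ m) (h : m ≤ m') :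
    RCDerives bar 1 (alternating bar a m) (alternating bar a m') := by
  induction m', h using Nat.le_induction with
  | base => exact .refl
  | succ m' hm' ih =>
      obtain ⟨j, rfl⟩ := Nat.exists_eq_add_of_le' (hm.trans hm')
      exact ih.tail (rcStep_alternating a j)

lemma rcDerives_blockWord (s : List (ZMod q)) {m m' : ℕ} (hm : 1 ≤ m) (h : m ≤ m') :
    RCDerives bar 1 (blockWord bar s m) (blockWord bar s m') := by
  induction s with
  | nil => exact .refl
  | cons a s ih => exact (rcDerives_alternating a hm h).append ih

lemma exists_rcDerives_cons_alternating (hinv : Function.Involutive bar) {a b : ZMod q}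
    (h : SameBlock bar a b) (m : ℕ) :
    ∃ m' ≥ m, RCDerives bar 1 (a :: alternating bar b m) (alternating bar a m') := by
  rcases h with rfl | rfl
  · refine ⟨m + 2, by omega, .single ?_⟩
    rw [alternating_add_two hinv]
    exact rcStep_one_iff.mpr ⟨[], b, alternating bar b m, rfl, rfl⟩
  · exact ⟨m + 1, by omega, .refl⟩

lemma exists_rcDerives_blockWord_sig (hinv : Function.Involutive bar) (x : List (ZMod q)) :
    ∃ m ≥ 1, RCDerives bar 1 x (blockWord bar (sig bar x) m) := by
  induction x with
  | nil => exact ⟨1, le_rfl, .refl⟩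
  | cons a l ih =>
      obtain ⟨m, hm, hl⟩ := ih
      have ha := hl.cons a
      rw [sig_cons]
      rcases hs : sig bar l with _ | ⟨b, t⟩
      · refine ⟨m, hm, ?_⟩
        simp only [hs, blockWord, consSig, List.flatMap_nil, List.flatMap_cons,
          List.append_nil] at ha ⊢
        exact ha.trans (rcDerives_alternating a le_rfl hm)
      by_cases hab : SameBlock bar a b
      · obtain ⟨m', hm', hd⟩ := exists_rcDerives_cons_alternating hinv hab m
        refine ⟨m', by omega, ?_⟩
        simp only [hs, blockWord, List.flatMap_cons, consSig, if_pos hab] at ha ⊢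
        exact ha.trans (hd.append (rcDerives_blockWord t hm hm'))
      · refine ⟨m, hm, ?_⟩
        simp only [hs, blockWord, List.flatMap_cons, consSig, if_neg hab] at ha ⊢
        exact ha.trans ((rcDerives_alternating a le_rfl hm).append .refl)

theorem exists_common_rcDerives_iff (hinv : Function.Involutive bar) :
    (∃ z, RCDerives bar 1 x z ∧ RCDerives bar 1 y z) ↔ sig bar x = sig bar y := by
  constructor
  · rintro ⟨z, hx, hy⟩
    rw [← sig_eq_of_rcDerives hinv hx, ← sig_eq_of_rcDerives hinv hy]
  · intro h
    obtain ⟨m, hm, hx⟩ := exists_rcDerives_blockWord_sig hinv x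
    obtain ⟨m', hm', hy⟩ := exists_rcDerives_blockWord_sig hinv y
    refine ⟨blockWord bar (sig bar x) (max m m'), ?_, ?_⟩
    · exact hx.trans (rcDerives_blockWord _ hm (le_max_left _ _))
    · rw [h]
      exact hy.trans (rcDerives_blockWord _ hm' (le_max_right _ _))

end Duplication

section Codes

variable {q : ℕ} {bar : ZMod q → ZMod q}

theorem isRCCode_one_iff (hinv : Function.Involutive bar) {n : ℕ}
    {C : Finset (List (ZMod q))} :
    IsRCCode bar 1 n C ↔ (∀ c ∈ C, c.length = n) ∧ Set.InjOn (sig bar) C := by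
  refine and_congr_right fun _ =>
    ⟨fun h c hc c' hc' hsig => ?_, fun h c hc c' hc' hne z hz hz' => ?_⟩
  · by_contra hne
    obtain ⟨z, hz, hz'⟩ := (exists_common_rcDerives_iff hinv).mpr hsig
    exact h c hc c' hc' hne z hz hz'
  · exact hne (h hc hc' ((exists_common_rcDerives_iff hinv).mp ⟨z, hz, hz'⟩))

theorem isGreatest_card_signatures [NeZero q] (hinv : Function.Involutive bar) {n : ℕ}
    (hn : 1 ≤ n) :
    IsGreatest {M | ∃ C : Finset (List (ZMod q)), IsRCCode bar 1 n C ∧ C.card = M}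
      #(signatures bar n) := by
  have hpad : Set.LeftInvOn (sig bar) (padFirst n) (signatures bar n) := fun s hs =>
    sig_padFirst hinv n (mem_signatures.mp hs).2.2
  constructor
  · refine ⟨(signatures bar n).image (padFirst n), (isRCCode_one_iff hinv).mpr ⟨?_, ?_⟩,
      card_image_of_injOn hpad.injOn⟩
    · simp only [mem_image]
      rintro _ ⟨s, hs, rfl⟩
      obtain ⟨hne, hlen, -⟩ := mem_signatures.mp hs
      exact length_padFirst hne hlen
    · simp only [coe_image]
      rintro _ ⟨s, hs, rfl⟩ _ ⟨s', hs', rfl⟩ h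
      rw [hpad hs, hpad hs'] at h
      rw [h]
  · rintro M ⟨C, hC, rfl⟩
    obtain ⟨hlen, hinj⟩ := (isRCCode_one_iff hinv).mp hC
    rw [← card_image_of_injOn hinj]
    refine card_le_card (image_subset_iff.mpr fun c hc => ?_)
    have hne : c ≠ [] := by
      rintro rfl
      simp [← hlen [] hc] at hn
    simpa only [hlen c hc] using sig_mem_signatures hinv hne

end Codes

section Growth

open Real

lemma tendsto_log_div_of_le_of_le {r c₁ c₂ : ℝ} {a : ℕ → ℝ} (hr : 0 < r)
    (hc₁ : 0 < c₁)
    (h : ∀ᶠ n in atTop, c₁ * r ^ n ≤ a n ∧ a n ≤ c₂ * r ^ n) :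
    Tendsto (fun n : ℕ => log (a n) / n) atTop (𝓝 (log r)) := by
  have hlim (c : ℝ) : Tendsto (fun n : ℕ => log r + log c / n) atTop (𝓝 (log r)) := by
    simpa using (tendsto_const_div_atTop_nhds_zero_nat (log c)).const_add (log r)
  refine tendsto_of_tendsto_of_tendsto_of_le_of_le' (hlim c₁) (hlim c₂) ?_ ?_ <;>
    filter_upwards [h, eventually_gt_atTop 0] with n ⟨h₁, h₂⟩ hn <;>
    have hn' : (0 : ℝ) < n := Nat.cast_pos.mpr hn
  · have hlow : 0 < c₁ * r ^ n := by positivity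
    have := log_le_log hlow h₁
    rw [log_mul hc₁.ne' (by positivity), log_pow] at this
    rw [le_div_iff₀ hn', add_mul, div_mul_cancel₀ _ hn'.ne']
    linarith
  · have hpos : 0 < a n := lt_of_lt_of_le (by positivity) h₁
    have hc₂ : 0 < c₂ := pos_of_mul_pos_left (hpos.trans_le h₂) (by positivity)
    have := log_le_log hpos h₂
    rw [log_mul hc₂.ne' (by positivity), log_pow] at this
    rw [div_le_iff₀ hn', add_mul, div_mul_cancel₀ _ hn'.ne']
    linarith

lemma tendsto_logb_div_of_le_of_le (b : ℝ) {r c₁ c₂ : ℝ} {a : ℕ → ℝ} (hr : 0 < r)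
    (hc₁ : 0 < c₁) (h : ∀ᶠ n in atTop, c₁ * r ^ n ≤ a n ∧ a n ≤ c₂ * r ^ n) :
    Tendsto (fun n : ℕ => logb b (a n) / n) atTop (𝓝 (logb b r)) := by
  simpa only [logb, div_right_comm] using
    (tendsto_log_div_of_le_of_le hr hc₁ h).div_const (log b)

lemma mul_geomSum_eq {r : ℕ} (hr : 2 ≤ r) (c n : ℕ) :
    c * ∑ j ∈ range n, r ^ j = c * (r ^ n - 1) / (r - 1) := by
  have hdvd : r - 1 ∣ r ^ n - 1 := by simpa using Nat.sub_dvd_pow_sub_pow r 1 n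
  rw [Nat.geomSum_eq hr, Nat.mul_div_assoc _ hdvd]

lemma pow_le_mul_geomSum {r c n : ℕ} (hrc : r ≤ c) (hn : 1 ≤ n) :
    r ^ n ≤ c * ∑ j ∈ range n, r ^ j := by
  obtain ⟨m, rfl⟩ := Nat.exists_eq_add_of_le' hn
  rw [pow_succ', sum_range_succ]
  exact Nat.mul_le_mul hrc (Nat.le_add_left _ _)

end Growth

theorem stmt7_general {q : ℕ} (hq4 : 4 ≤ q) (bar : ZMod q → ZMod q)
    (hinv : Function.Involutive bar) (hfp : ∀ a, bar a ≠ a) :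
    (∀ n : ℕ, 1 ≤ n →
      IsGreatest {M : ℕ | ∃ C : Finset (List (ZMod q)),
        IsRCCode bar 1 n C ∧ C.card = M} (q * ((q - 2) ^ n - 1) / (q - 3))) ∧
    Filter.limsup (fun n : ℕ => Real.logb q (maxRCCode bar 1 n) / n)
      Filter.atTop = Real.logb q (q - 2) := by
  have : NeZero q := ⟨by omega⟩
  have hmax (n : ℕ) (hn : 1 ≤ n) : IsGreatest {M : ℕ | ∃ C : Finset (List (ZMod q)),
      IsRCCode bar 1 n C ∧ C.card = M} (q * ∑ j ∈ range n, (q - 2) ^ j) := by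
    simpa only [card_signatures hinv hfp, ZMod.card] using isGreatest_card_signatures hinv hn
  refine ⟨fun n hn => ?_, Tendsto.limsup_eq ?_⟩
  · rw [show q - 3 = q - 2 - 1 by omega, ← mul_geomSum_eq (by omega)]
    exact hmax n hn
  · have hr : ((q - 2 : ℕ) : ℝ) = q - 2 := by rw [Nat.cast_sub (by omega)]; norm_num
    rw [← hr]
    refine tendsto_logb_div_of_le_of_le _ (Nat.cast_pos.mpr (by omega)) one_pos (c₂ := q) ?_
    filter_upwards [eventually_ge_atTop 1] with n hn
    rw [maxRCCode, (hmax n hn).csSup_eq, one_mul]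
    exact ⟨mod_cast pow_le_mul_geomSum (by omega) hn,
      mod_cast Nat.mul_le_mul_left q (Nat.geomSum_lt (by omega) fun _ => mem_range.mp).le⟩

/-- For `n ≥ 1` and even `q ≥ 4`, the maximal size of a length-`n` `q`-ary code
correcting any number of length-1 reverse-complement duplications equals
`q·((q−2)^n − 1)/(q−3)`, hence the coding capacity equals `log_q (q−2)`. -/
theorem stmt7 {q : ℕ} (hq4 : 4 ≤ q) (hq : Even q) (bar : ZMod q → ZMod q)
    (hinv : Function.Involutive bar) (hfp : ∀ a, bar a ≠ a) :
    (∀ n : ℕ, 1 ≤ n →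
      IsGreatest {M : ℕ | ∃ C : Finset (List (ZMod q)),
        IsRCCode bar 1 n C ∧ C.card = M} (q * ((q - 2) ^ n - 1) / (q - 3))) ∧
    Filter.limsup (fun n : ℕ => Real.logb q (maxRCCode bar 1 n) / n)
      Filter.atTop = Real.logb q (q - 2) :=
  stmt7_general hq4 bar hinv hfp
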